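/- Let ρ be an n-qubit state and suppose each of the n qubit pairs of ρ ⊗ ρ is measured in the Bell basis, yielding projectors S₁,…,S_n. Then for any Pauli observable P = σ₁ ⊗ ⋯ ⊗ σ_n, E[∏_{k=1}^n Tr((σ_k ⊗ σ_k) S_k)] = Tr((P ⊗ P)(ρ ⊗ ρ)) = |Tr(Pρ)|², and each factor Tr((σ_k ⊗ σ_k)S_k) ∈ {+1, −1}. -/

import Mathlib

open Matrix BigOperators
open scoped Kronecker ComplexOrder

/-- The single-qubit Pauli matrices `I, X, Y, Z`. -/
noncomputable def pauliM : Fin 4 → Matrix (Fin 2) (Fin 2) ℂ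
  | 0 => 1
  | 1 => !![0, 1; 1, 0]
  | 2 => !![0, -Complex.I; Complex.I, 0]
  | 3 => !![1, 0; 0, -1]

/-- The `n`-qubit Pauli operator `P_a = σ_{a 1} ⊗ ⋯ ⊗ σ_{a n}`. -/
noncomputable def nPauli {n : ℕ} (a : Fin n → Fin 4) :
    Matrix (Fin n → Fin 2) (Fin n → Fin 2) ℂ :=
  fun x y => ∏ i, pauliM (a i) (x i) (y i)

/-- The four Bell states `Ψ⁺, Ψ⁻, Φ⁺, Φ⁻` on two qubits. -/
noncomputable def bellVec : Fin 4 → Fin 2 → Fin 2 → ℂ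
  | 0 => fun x y => if x = y then ((Real.sqrt 2 : ℝ) : ℂ)⁻¹ else 0
  | 1 => fun x y => if x = y then
      (if x = 0 then ((Real.sqrt 2 : ℝ) : ℂ)⁻¹ else -((Real.sqrt 2 : ℝ) : ℂ)⁻¹) else 0
  | 2 => fun x y => if x ≠ y then ((Real.sqrt 2 : ℝ) : ℂ)⁻¹ else 0
  | 3 => fun x y => if x ≠ y then
      (if x = 0 then ((Real.sqrt 2 : ℝ) : ℂ)⁻¹ else -((Real.sqrt 2 : ℝ) : ℂ)⁻¹) else 0

/-- The rank-one projector onto the Bell state `k`, acting on a qubit of each copy. -/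
noncomputable def bellProj (k : Fin 4) : Matrix (Fin 2 × Fin 2) (Fin 2 × Fin 2) ℂ :=
  fun p q => bellVec k p.1 p.2 * (starRingEnd ℂ) (bellVec k q.1 q.2)

/-- `Tr((σ ⊗ σ) S_k)` for a single-qubit Pauli `σ` and Bell outcome projector `S_k`. -/
noncomputable def bellFactor (σ k : Fin 4) : ℂ :=
  ((pauliM σ ⊗ₖ pauliM σ) * bellProj k).trace

/-- The full projector on `(ρ ⊗ ρ)` corresponding to Bell outcomes `b k` on the
`n` qubit pairs. -/
noncomputable def bellOutcomeProj {n : ℕ} (b : Fin n → Fin 4) :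
    Matrix ((Fin n → Fin 2) × (Fin n → Fin 2)) ((Fin n → Fin 2) × (Fin n → Fin 2)) ℂ :=
  fun p q => ∏ k, bellProj (b k) ((p.1 k, p.2 k)) ((q.1 k, q.2 k))

/-- `ρ ⊗ ρ` as a matrix on the two copies. -/
noncomputable def twoCopies {n : ℕ} (ρ : Matrix (Fin n → Fin 2) (Fin n → Fin 2) ℂ) :
    Matrix ((Fin n → Fin 2) × (Fin n → Fin 2)) ((Fin n → Fin 2) × (Fin n → Fin 2)) ℂ :=
  fun p q => ρ p.1 q.1 * ρ p.2 q.2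

/-! Each Bell state is a simultaneous eigenvector of every `σ ⊗ σ`, with eigenvalue `±1`, and
the Bell projectors sum to the identity; hence `σ ⊗ σ = ∑ₖ λₖ Sₖ` with `λₖ = Tr((σ ⊗ σ) Sₖ)`.
Taking the product over the `n` qubit pairs expands `P ⊗ P` as `∑_b (∏ₖ λ_{bₖ}) S_b`, and
tracing against `ρ ⊗ ρ` gives the expectation identity. Finally `Tr((P ⊗ P)(ρ ⊗ ρ)) = Tr(Pρ)²`,
and `Tr(Pρ)` is real because `P` and `ρ` are Hermitian. -/

section Spectral

variable {ι m R : Type*} [Fintype ι] [Fintype m] [Semiring R] [Star R]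

theorem Matrix.eq_sum_smul_vecMulVec_of_mulVec_eq [DecidableEq m] {M : Matrix m m R}
    {v : ι → m → R} {c : ι → R} (hsum : ∑ i, vecMulVec (v i) (star (v i)) = 1)
    (heig : ∀ i, M *ᵥ v i = c i • v i) :
    M = ∑ i, c i • vecMulVec (v i) (star (v i)) := by
  calc M = M * ∑ i, vecMulVec (v i) (star (v i)) := by rw [hsum, mul_one]
    _ = _ := by simp only [Matrix.mul_sum, mul_vecMulVec, heig, smul_vecMulVec]

theorem Matrix.trace_mul_vecMulVec_of_mulVec_eq {M : Matrix m m R} {v : m → R} {c : R}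
    (hnorm : v ⬝ᵥ star v = 1) (heig : M *ᵥ v = c • v) :
    (M * vecMulVec v (star v)).trace = c := by
  rw [mul_vecMulVec, heig, trace_vecMulVec, smul_dotProduct, hnorm, smul_eq_mul, mul_one]

end Spectral

theorem Matrix.IsHermitian.star_trace_mul {m : Type*} [Fintype m] {A B : Matrix m m ℂ}
    (hA : A.IsHermitian) (hB : B.IsHermitian) : star (A * B).trace = (A * B).trace := by
  rw [← trace_conjTranspose, conjTranspose_mul, hA.eq, hB.eq, trace_mul_comm]

theorem Complex.re_sq_of_conj_eq {z : ℂ} (hz : (starRingEnd ℂ) z = z) :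
    (z ^ 2).re = ‖z‖ ^ 2 := by
  rw [← Complex.conj_eq_iff_re.mp hz, ← Complex.ofReal_pow, Complex.ofReal_re,
    Complex.norm_real, Real.norm_eq_abs, sq_abs]

lemma inv_sqrt_two_mul_self : ((Real.sqrt 2 : ℝ) : ℂ)⁻¹ * ((Real.sqrt 2 : ℝ) : ℂ)⁻¹ = 2⁻¹ := by
  rw [← mul_inv, ← Complex.ofReal_mul, Real.mul_self_sqrt zero_le_two]
  norm_num

noncomputable def bellState (k : Fin 4) : Fin 2 × Fin 2 → ℂ := fun p => bellVec k p.1 p.2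

theorem bellProj_eq_vecMulVec (k : Fin 4) :
    bellProj k = vecMulVec (bellState k) (star (bellState k)) := rfl

theorem dotProduct_bellState_star (k : Fin 4) : bellState k ⬝ᵥ star (bellState k) = 1 := by
  fin_cases k <;> norm_num [dotProduct, Fintype.sum_prod_type, bellState, bellVec,
    Complex.conj_ofReal, inv_sqrt_two_mul_self]

theorem sum_bellProj : ∑ k, bellProj k = 1 := by
  ext ⟨x, y⟩ ⟨x', y'⟩
  simp only [Matrix.sum_apply, Fin.sum_univ_four]
  fin_cases x <;> fin_cases y <;> fin_cases x' <;> fin_cases y' <;>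
    norm_num [bellProj, bellVec, Complex.conj_ofReal, inv_sqrt_two_mul_self]

/-- Eigenvalue of `σ ⊗ σ` on the Bell state `k`: rows `σ = I, X, Y, Z`, columns
`k = Ψ⁺, Ψ⁻, Φ⁺, Φ⁻`. -/
def bellSign : Matrix (Fin 4) (Fin 4) ℤ :=
  !![1, 1, 1, 1; 1, -1, 1, -1; -1, 1, 1, -1; 1, 1, -1, -1]

theorem bellSign_eq_one_or_neg_one (σ k : Fin 4) : bellSign σ k = 1 ∨ bellSign σ k = -1 := by
  fin_cases σ <;> fin_cases k <;> decide

theorem kron_pauliM_mulVec_bellState (σ k : Fin 4) :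
    (pauliM σ ⊗ₖ pauliM σ) *ᵥ bellState k = (bellSign σ k : ℂ) • bellState k := by
  ext ⟨x, y⟩
  simp only [mulVec, dotProduct, Fintype.sum_prod_type, Fin.sum_univ_two, Pi.smul_apply,
    smul_eq_mul]
  fin_cases σ <;> fin_cases k <;> fin_cases x <;> fin_cases y <;>
    simp [bellState, bellVec, pauliM, bellSign]

theorem kron_pauliM_eq_sum_bellProj (σ : Fin 4) :
    pauliM σ ⊗ₖ pauliM σ = ∑ k, (bellSign σ k : ℂ) • bellProj k := by
  simp only [bellProj_eq_vecMulVec]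
  exact Matrix.eq_sum_smul_vecMulVec_of_mulVec_eq sum_bellProj (kron_pauliM_mulVec_bellState σ)

theorem bellFactor_eq_bellSign (σ k : Fin 4) : bellFactor σ k = bellSign σ k :=
  Matrix.trace_mul_vecMulVec_of_mulVec_eq (dotProduct_bellState_star k)
    (kron_pauliM_mulVec_bellState σ k)

theorem bellFactor_eq_one_or_neg_one (σ k : Fin 4) :
    bellFactor σ k = 1 ∨ bellFactor σ k = -1 := by
  rw [bellFactor_eq_bellSign]
  rcases bellSign_eq_one_or_neg_one σ k with h | h <;> simp [h]

theorem isHermitian_pauliM (σ : Fin 4) : (pauliM σ).IsHermitian := by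
  ext x y
  fin_cases σ <;> fin_cases x <;> fin_cases y <;> simp [pauliM]

theorem isHermitian_nPauli {n : ℕ} (a : Fin n → Fin 4) : (nPauli a).IsHermitian := by
  ext x y
  simp only [conjTranspose_apply, nPauli, star_prod, fun k => (isHermitian_pauliM (a k)).apply]

theorem twoCopies_nPauli_eq_sum {n : ℕ} (a : Fin n → Fin 4) :
    twoCopies (nPauli a) =
      ∑ b : Fin n → Fin 4, (∏ k, bellFactor (a k) (b k)) • bellOutcomeProj b := by
  ext p q
  have hkron (k : Fin n) := congr_fun₂ (kron_pauliM_eq_sum_bellProj (a k))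
    (p.1 k, p.2 k) (q.1 k, q.2 k)
  simp only [kroneckerMap_apply, Matrix.sum_apply, Matrix.smul_apply, smul_eq_mul] at hkron
  simp only [twoCopies, nPauli, bellOutcomeProj, Matrix.sum_apply, Matrix.smul_apply,
    smul_eq_mul, ← Finset.prod_mul_distrib, hkron, Fintype.prod_sum, bellFactor_eq_bellSign]

theorem trace_twoCopies_mul {n : ℕ} (A B : Matrix (Fin n → Fin 2) (Fin n → Fin 2) ℂ) :
    (twoCopies A * twoCopies B).trace = (A * B).trace ^ 2 := by
  simp only [trace, mul_apply, twoCopies, diag_apply, Fintype.sum_prod_type, sq,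
    Finset.sum_mul_sum]
  exact Fintype.sum_congr _ _ fun x => Fintype.sum_congr _ _ fun y =>
    Fintype.sum_congr _ _ fun z => Fintype.sum_congr _ _ fun w => by ring

theorem bell_measurement_estimates_pauli_sq_general {n : ℕ}
    (ρ : Matrix (Fin n → Fin 2) (Fin n → Fin 2) ℂ)
    (hρ : ρ.PosSemidef) (a : Fin n → Fin 4) :
    (∀ σ k : Fin 4, bellFactor σ k = 1 ∨ bellFactor σ k = -1) ∧
      ∑ b : Fin n → Fin 4,
          ((bellOutcomeProj b * twoCopies ρ).trace).re * ∏ k, (bellFactor (a k) (b k)).re =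
        ((twoCopies (nPauli a) * twoCopies ρ).trace).re ∧
      ((twoCopies (nPauli a) * twoCopies ρ).trace).re =
        ‖(nPauli a * ρ).trace‖ ^ 2 := by
  refine ⟨bellFactor_eq_one_or_neg_one, ?_, ?_⟩
  · have hreal (b : Fin n → Fin 4) :
        ((∏ k, (bellFactor (a k) (b k)).re : ℝ) : ℂ) = ∏ k, bellFactor (a k) (b k) := by
      simp [bellFactor_eq_bellSign]
    calc ∑ b : Fin n → Fin 4,
          ((bellOutcomeProj b * twoCopies ρ).trace).re * ∏ k, (bellFactor (a k) (b k)).re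
        = (∑ b : Fin n → Fin 4,
            (∏ k, bellFactor (a k) (b k)) * (bellOutcomeProj b * twoCopies ρ).trace).re := by
          simp only [Complex.re_sum, ← hreal, Complex.re_ofReal_mul, mul_comm]
      _ = ((∑ b : Fin n → Fin 4,
            (∏ k, bellFactor (a k) (b k)) • bellOutcomeProj b) * twoCopies ρ).trace.re := by
          simp only [Matrix.sum_mul, Matrix.smul_mul, trace_sum, trace_smul, smul_eq_mul]
      _ = ((twoCopies (nPauli a) * twoCopies ρ).trace).re := by rw [twoCopies_nPauli_eq_sum]
  · rw [trace_twoCopies_mul]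
    exact Complex.re_sq_of_conj_eq ((isHermitian_nPauli a).star_trace_mul hρ.isHermitian)

/-- Bell-basis measurement of `ρ ⊗ ρ` on each of the `n` qubit pairs: each factor
`Tr((σ_k ⊗ σ_k) S_k)` is `±1`, and the expectation of their product over the Bell
outcome distribution equals `Tr((P ⊗ P)(ρ ⊗ ρ)) = |Tr(Pρ)|²`. -/
theorem bell_measurement_estimates_pauli_sq {n : ℕ}
    (ρ : Matrix (Fin n → Fin 2) (Fin n → Fin 2) ℂ)
    (hρ : ρ.PosSemidef) (htr : ρ.trace = 1) (a : Fin n → Fin 4) :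
    (∀ σ k : Fin 4, bellFactor σ k = 1 ∨ bellFactor σ k = -1) ∧
      ∑ b : Fin n → Fin 4,
          ((bellOutcomeProj b * twoCopies ρ).trace).re * ∏ k, (bellFactor (a k) (b k)).re =
        ((twoCopies (nPauli a) * twoCopies ρ).trace).re ∧
      ((twoCopies (nPauli a) * twoCopies ρ).trace).re =
        ‖(nPauli a * ρ).trace‖ ^ 2 :=
  bell_measurement_estimates_pauli_sq_general ρ hρ a
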